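/- Let (α, ≤) be a partial order in which, for every element v, the set {x : x ≤ v} of elements below v is a chain (i.e., any two elements below a common element are comparable). Let u_1, …, u_m be elements of α such that for all indices s < t it is not the case that u_s < u_t. For each t with 1 ≤ t ≤ m define V_t = {v ∈ α : u_t ≤ v and there is no s < t with u_t ≤ u_s ≤ v}. Then the sets V_1, …, V_m are pairwise disjoint. -/

import Mathlib

/-! If `v` is visited from both `u s` and `u t` with `s < t`, then `u s` and `u t` both lie
below `v`, hence are comparable; since `u s` is not strictly below `u t`, this forces
`u t ≤ u s ≤ v`, so the earlier root `u s` blocks `v` from the traversal at `u t`. -/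

section

open Function

variable {α ι : Type*} [PartialOrder α]

def visitSet [LT ι] (u : ι → α) (t : ι) : Set α :=
  {v | u t ≤ v ∧ ¬ ∃ r, r < t ∧ u t ≤ u r ∧ u r ≤ v}

theorem disjoint_visitSet_of_lt [LT ι] (hchain : ∀ v x y : α, x ≤ v → y ≤ v → x ≤ y ∨ y ≤ x)
    (u : ι → α) {s t : ι} (hst : s < t) (hu : ¬ u s < u t) :
    Disjoint (visitSet u s) (visitSet u t) := by
  rw [Set.disjoint_left]
  rintro v ⟨hsv, -⟩ ⟨htv, hblocked⟩
  have hts : u t ≤ u s := (hchain v (u s) (u t) hsv htv).elim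
    (fun h => (eq_of_le_of_not_lt h hu).ge) id
  exact hblocked ⟨s, hst, hts, hsv⟩

theorem pairwise_disjoint_visitSet [LinearOrder ι]
    (hchain : ∀ v x y : α, x ≤ v → y ≤ v → x ≤ y ∨ y ≤ x)
    (u : ι → α) (hu : ∀ s t : ι, s < t → ¬ u s < u t) :
    Pairwise (Disjoint on visitSet u) :=
  (pairwise_disjoint_on _).2 fun _ _ hst => disjoint_visitSet_of_lt hchain u hst (hu _ _ hst)

end

/-- In a partial order where the set of elements below any element is a
chain (the ancestor order of a rooted tree), if `u 1, …, u m` satisfy that no earlier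
element is strictly below a later one, then the sets
`V t = {v | u t ≤ v ∧ ¬∃ s < t, u t ≤ u s ≤ v}` are pairwise disjoint. -/
theorem marking_visits_disjoint
    {α : Type*} [PartialOrder α]
    (hchain : ∀ v x y : α, x ≤ v → y ≤ v → x ≤ y ∨ y ≤ x)
    (m : ℕ) (u : Fin m → α)
    (hu : ∀ s t : Fin m, s < t → ¬ u s < u t) :
    ∀ s t : Fin m, s ≠ t →
      Disjoint
        ({v : α | u s ≤ v ∧ ¬ ∃ r : Fin m, r < s ∧ u s ≤ u r ∧ u r ≤ v} : Set α)
        ({v : α | u t ≤ v ∧ ¬ ∃ r : Fin m, r < t ∧ u t ≤ u r ∧ u r ≤ v} : Set α) :=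
  fun _ _ hst => pairwise_disjoint_visitSet hchain u hu hst
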